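/- Under the sectoriality assumption on 𝒜 and with α = 1/2, the matrix A = [[0,I],[−𝒜,−ρ𝒜^{1/2}]] with D(A) = E₁ × E_{1/2} on X = E_{1/2} × E satisfies: for all (φ,ψ) ∈ X, ‖A^{-1}(φ,ψ)‖_X ≍_ρ ‖φ‖_E + ‖𝒜^{-1/2}ψ‖_E. Consequently the extrapolation space X_{-1} (completion of X in the norm ‖A^{-1}·‖_X) is isomorphic to E × E_{-1/2}. -/

import Mathlib

open Real

/-!
Composing with `𝒜^{1/2}` and using the group law of the power scale,
`‖A⁻¹(x, y)‖_X = ‖ρ x + 𝒜^{-1/2} y‖ + ‖x‖`, and the triangle inequality makes this comparable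
to `‖x‖ + ‖𝒜^{-1/2} y‖` with constants `1 + |ρ|`.
-/

section NormEquiv

variable {𝕜 E : Type*} [NormedField 𝕜] [SeminormedAddCommGroup E] [NormedSpace 𝕜 E]

theorem norm_smul_add_add_norm_le (a : 𝕜) (x w : E) :
    ‖a • x + w‖ + ‖x‖ ≤ (‖a‖ + 1) * (‖x‖ + ‖w‖) := by
  have := norm_add_le (a • x) w
  rw [norm_smul] at this
  nlinarith [norm_nonneg a, norm_nonneg x, norm_nonneg w]

theorem norm_add_norm_le_norm_smul_add_add_norm (a : 𝕜) (x w : E) :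
    ‖x‖ + ‖w‖ ≤ (‖a‖ + 1) * (‖a • x + w‖ + ‖x‖) := by
  have hw : ‖w‖ ≤ ‖a • x + w‖ + ‖a‖ * ‖x‖ := by
    calc ‖w‖ = ‖(a • x + w) - a • x‖ := by rw [add_sub_cancel_left]
      _ ≤ ‖a • x + w‖ + ‖a • x‖ := norm_sub_le _ _
      _ = ‖a • x + w‖ + ‖a‖ * ‖x‖ := by rw [norm_smul]
  nlinarith [norm_nonneg a, norm_nonneg x, norm_nonneg (a • x + w)]

end NormEquiv

section PowerScale

variable {G R M : Type*} [AddGroup G] [Semiring R] [TopologicalSpace M] [AddCommMonoid M]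
  [Module R M] (Ap : G → M ≃L[R] M)

theorem apply_apply_neg (hApAdd : ∀ s t : G, ∀ x : M, Ap (s + t) x = Ap s (Ap t x))
    (hAp0 : Ap 0 = ContinuousLinearEquiv.refl R M) (s : G) (x : M) :
    Ap s (Ap (-s) x) = x := by
  rw [← hApAdd, add_neg_cancel, hAp0, ContinuousLinearEquiv.refl_apply]

theorem apply_symm_apply_eq_sub (hApAdd : ∀ s t : G, ∀ x : M, Ap (s + t) x = Ap s (Ap t x))
    (s t : G) (y : M) : Ap s ((Ap t).symm y) = Ap (s - t) y := by
  conv_rhs => rw [← (Ap t).apply_symm_apply y, ← hApAdd, sub_add_cancel]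

end PowerScale

theorem damped_matrix_extrapolation_norm_equiv_general
    {Z : Type*} [NormedAddCommGroup Z] [NormedSpace ℂ Z]
    (Ap : ℝ → Z ≃L[ℂ] Z)
    (hAp0 : Ap 0 = ContinuousLinearEquiv.refl ℂ Z)
    (hApAdd : ∀ s t : ℝ, ∀ x : Z, Ap (s + t) x = Ap s (Ap t x))
    (ρ : ℝ) :
    ∃ c C : ℝ, 0 < c ∧ 0 < C ∧
      ∀ x y : Z,  -- `(x,y) ∈ X = E_{1/2} × E`
        c * (‖x‖ + ‖Ap (-(1/2)) y‖) ≤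
            ‖Ap (1/2) (-((ρ : ℂ) • Ap (-(1/2)) x) - (Ap 1).symm y)‖ + ‖x‖ ∧
        ‖Ap (1/2) (-((ρ : ℂ) • Ap (-(1/2)) x) - (Ap 1).symm y)‖ + ‖x‖ ≤
            C * (‖x‖ + ‖Ap (-(1/2)) y‖) := by
  have hA_inv : ∀ x y : Z, ‖Ap (1/2) (-((ρ : ℂ) • Ap (-(1/2)) x) - (Ap 1).symm y)‖ =
      ‖(ρ : ℂ) • x + Ap (-(1/2)) y‖ := by
    intro x y
    rw [map_sub, map_neg, map_smul, apply_apply_neg Ap hApAdd hAp0,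
      apply_symm_apply_eq_sub Ap hApAdd, ← neg_add', norm_neg]
    norm_num
  refine ⟨(‖(ρ : ℂ)‖ + 1)⁻¹, ‖(ρ : ℂ)‖ + 1, by positivity, by positivity, fun x y => ?_⟩
  rw [hA_inv, inv_mul_le_iff₀ (by positivity)]
  exact ⟨norm_add_norm_le_norm_smul_add_add_norm _ x _, norm_smul_add_add_norm_le _ x _⟩

/-- **Norm equivalence defining the extrapolation space `X₋₁ ≅ E × E_{-1/2}` for the damped
wave/plate generator with `α = 1/2`:** for `A = [[0,I],[−𝒜,−ρ𝒜^{1/2}]]` on `X = E_{1/2} × E`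
(norm `‖(φ,ψ)‖_X = ‖𝒜^{1/2}φ‖ + ‖ψ‖`, realized via the fractional power scale `Ap θ = 𝒜^θ`),
one has `‖A⁻¹(φ,ψ)‖_X ≍_ρ ‖φ‖_E + ‖𝒜^{-1/2}ψ‖_E`, with `A⁻¹ = [[−ρ𝒜^{-1/2}, −𝒜⁻¹],[I,0]]`. -/
theorem damped_matrix_extrapolation_norm_equiv
    {Z : Type*} [NormedAddCommGroup Z] [NormedSpace ℂ Z] [CompleteSpace Z]
    (Ap : ℝ → Z ≃L[ℂ] Z)
    (hAp0 : Ap 0 = ContinuousLinearEquiv.refl ℂ Z)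
    (hApAdd : ∀ s t : ℝ, ∀ x : Z, Ap (s + t) x = Ap s (Ap t x))
    (φ : ℝ) (hφ : 0 < φ ∧ φ < π / 2) (M : ℝ)
    (hsect : ∀ lam : ℂ, lam ≠ 0 → |lam.arg| ≤ π - φ →
      ∃ Rl : Z →L[ℂ] Z, (∀ x, lam • Rl x + Ap 1 (Rl x) = x) ∧
        (∀ x, Rl (lam • x + Ap 1 x) = x) ∧ ‖lam‖ * ‖Rl‖ ≤ M)
    (ρ : ℝ) (hρ : 2 * Real.cos ((π - φ) / 2) < ρ) :
    ∃ c C : ℝ, 0 < c ∧ 0 < C ∧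
      ∀ x y : Z,  -- `(x,y) ∈ X = E_{1/2} × E`
        c * (‖x‖ + ‖Ap (-(1/2)) y‖) ≤
            ‖Ap (1/2) (-((ρ : ℂ) • Ap (-(1/2)) x) - (Ap 1).symm y)‖ + ‖x‖ ∧
        ‖Ap (1/2) (-((ρ : ℂ) • Ap (-(1/2)) x) - (Ap 1).symm y)‖ + ‖x‖ ≤
            C * (‖x‖ + ‖Ap (-(1/2)) y‖) :=
  damped_matrix_extrapolation_norm_equiv_general Ap hAp0 hApAdd ρ
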